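/- arXiv:2310.12772 — 13 statements merged into one kernel-verified Lean document; each statement's English description precedes it below -/
import Mathlib

section
/- A finite group G is a POEC group if and only if the set of all elements of square-free order forms an abelian subgroup of G. -/
def POEC (G : Type*) [Group G] : Prop :=
  ∀ x y : G, (orderOf x).Prime → (orderOf y).Prime → Commute x y

lemma sqf_lcm {m n : ℕ} (hm : Squarefree m) (hn : Squarefree n) :
    Squarefree (Nat.lcm m n) := by
  rw [Nat.squarefree_iff_factorization_le_one (Nat.lcm_ne_zero hm.ne_zero hn.ne_zero)]
  intro p
  rw [Nat.factorization_lcm hm.ne_zero hn.ne_zero]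
  exact sup_le ((Nat.squarefree_iff_factorization_le_one hm.ne_zero).1 hm p)
    ((Nat.squarefree_iff_factorization_le_one hn.ne_zero).1 hn p)

theorem stmt_1 {G : Type*} [Group G] [Finite G] :
    POEC G ↔ ∃ H : Subgroup G, (H : Set G) = {x : G | Squarefree (orderOf x)} ∧
      ∀ a ∈ H, ∀ b ∈ H, a * b = b * a := by
  constructor
  · intro hp
    set K := Subgroup.closure {x : G | (orderOf x).Prime} with hK
    have hcomm : ∀ a ∈ K, ∀ b ∈ K, a * b = b * a := by
      intro a ha b hb
      refine Subgroup.closure_induction₂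
        (p := fun x y _ _ => Commute x y)
        (fun x y hx hy => hp x y hx hy)
        (fun x _ => Commute.one_left x) (fun x _ => Commute.one_right x)
        (fun x y z _ _ _ h1 h2 => h1.mul_left h2)
        (fun y z x _ _ _ h1 h2 => h1.mul_right h2)
        (fun x y _ _ h => h.inv_left)
        (fun x y _ _ h => h.inv_right) ha hb
    refine ⟨K, ?_, hcomm⟩
    ext x
    simp only [SetLike.mem_coe, Set.mem_setOf_eq]
    constructor
    · intro hx
      refine Subgroup.closure_induction (p := fun g _ => Squarefree (orderOf g))
        (fun g hg => hg.squarefree) (by simp) ?_ (fun g _ h => by simpa using h) hx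
      intro a b ha hb hsa hsb
      have hc : Commute a b := hcomm a ha b hb
      exact (sqf_lcm hsa hsb).squarefree_of_dvd hc.orderOf_mul_dvd_lcm
    · intro hx
      -- strong induction on orderOf x
      have key : ∀ n : ℕ, ∀ x : G, orderOf x = n → Squarefree n → x ∈ K := by
        intro n
        induction n using Nat.strong_induction_on with
        | _ n ih =>
          intro x hxn hsn
          rcases eq_or_ne n 1 with rfl | hn1
          · have : x = 1 := orderOf_eq_one_iff.1 hxn
            rw [this]; exact one_mem K
          have hn0 : n ≠ 0 := hsn.ne_zero
          obtain ⟨p, hpp, hpd⟩ := Nat.exists_prime_and_dvd hn1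
          obtain ⟨m, hm⟩ := hpd
          have hpm : Nat.Coprime p m := by
            rw [Nat.Prime.coprime_iff_not_dvd hpp]
            intro ⟨c, hc⟩
            exact hpp.not_isUnit (hsn p ⟨c, by rw [hm, hc]; ring⟩)
          have hm0 : m ≠ 0 := by rintro rfl; simp [hm] at hn0
          have hordp : orderOf (x ^ p) = m := by
            rw [orderOf_pow, hxn, hm,
              Nat.gcd_eq_right (Dvd.intro m rfl),
              Nat.mul_div_cancel_left _ hpp.pos]
          have hordm : orderOf (x ^ m) = p := by
            rw [orderOf_pow, hxn, hm,
              Nat.gcd_eq_right (Dvd.intro_left p rfl),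
              Nat.mul_div_cancel _ (Nat.pos_of_ne_zero hm0)]
          have hmem1 : x ^ p ∈ K := by
            refine ih m ?_ (x ^ p) hordp (hsn.squarefree_of_dvd ⟨p, by rw [hm]; ring⟩)
            rw [hm]
            exact lt_mul_of_one_lt_left (Nat.pos_of_ne_zero hm0) hpp.one_lt
          have hmem2 : x ^ m ∈ K := Subgroup.subset_closure (by rw [Set.mem_setOf_eq, hordm]; exact hpp)
          obtain ⟨u, v, huv⟩ := (Nat.isCoprime_iff_coprime.2 hpm)
          have : x = (x ^ p) ^ u * (x ^ m) ^ v := by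
            rw [← zpow_natCast x p, ← zpow_natCast x m, ← zpow_mul, ← zpow_mul,
              ← zpow_add, mul_comm ((p:ℤ)) u, mul_comm ((m:ℤ)) v, huv, zpow_one]
          rw [this]
          exact mul_mem (Subgroup.zpow_mem K hmem1 u) (Subgroup.zpow_mem K hmem2 v)
      exact key (orderOf x) x rfl hx
  · rintro ⟨H, hset, habel⟩ x y hx hy
    have hxH : x ∈ H := by rw [← SetLike.mem_coe, hset]; exact hx.squarefree
    have hyH : y ∈ H := by rw [← SetLike.mem_coe, hset]; exact hy.squarefree
    exact habel x hxH y hyH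
end

section
/- If G is a finite POEC group, then P[G], the subgroup generated by all elements of prime order, is abelian, and every element of P[G] has square-free order. -/
theorem stmt_2 {G : Type*} [Group G] [Finite G] (h : POEC G) :
    (∀ a ∈ Subgroup.closure {x : G | (orderOf x).Prime},
      ∀ b ∈ Subgroup.closure {x : G | (orderOf x).Prime}, a * b = b * a) ∧
    (∀ a ∈ Subgroup.closure {x : G | (orderOf x).Prime}, Squarefree (orderOf a)) := by
  have hcomm : ∀ a ∈ Subgroup.closure {x : G | (orderOf x).Prime},
      ∀ b ∈ Subgroup.closure {x : G | (orderOf x).Prime}, a * b = b * a := by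
    intro a ha b hb
    induction ha using Subgroup.closure_induction with
    | mem x hx =>
      induction hb using Subgroup.closure_induction with
      | mem y hy => exact h x y hx hy
      | one => simp
      | mul y z _ _ hy hz => rw [← mul_assoc, hy, mul_assoc, hz, ← mul_assoc]
      | inv y _ hy => exact (Commute.inv_right hy).eq
    | one => simp
    | mul x y _ _ hx hy => rw [mul_assoc, hy, ← mul_assoc, hx, mul_assoc]
    | inv x _ hx => exact (Commute.inv_left hx).eq
  refine ⟨hcomm, ?_⟩
  intro a ha
  induction ha using Subgroup.closure_induction with
  | mem x hx => exact hx.squarefree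
  | one => simp only [orderOf_one]; exact squarefree_one
  | mul x y hx hy ihx ihy =>
    have hc : Commute x y := hcomm x hx y hy
    exact (sqf_lcm ihx ihy).squarefree_of_dvd hc.orderOf_mul_dvd_lcm
  | inv x _ hx => simpa using hx
end

section
/- If G is a finite non-abelian POEC group, then P[G] is a proper abelian subgroup of G, and consequently G is not simple. -/
theorem stmt_3 {G : Type*} [Group G] [Finite G] (h : POEC G)
    (hna : ∃ a b : G, a * b ≠ b * a) :
    Subgroup.closure {x : G | (orderOf x).Prime} ≠ ⊤ ∧
    (∀ a ∈ Subgroup.closure {x : G | (orderOf x).Prime},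
      ∀ b ∈ Subgroup.closure {x : G | (orderOf x).Prime}, a * b = b * a) ∧
    ¬ IsSimpleGroup G := by
  classical
  set S : Set G := {x : G | (orderOf x).Prime} with hS
  have hcomm : ∀ a ∈ Subgroup.closure S, ∀ b ∈ Subgroup.closure S, a * b = b * a := by
    intro a ha b hb
    refine Subgroup.closure_induction₂
      (p := fun x y _ _ => Commute x y)
      (fun x y hx hy => h x y hx hy)
      (fun x _ => Commute.one_left x)
      (fun x _ => Commute.one_right x)
      (fun x y z _ _ _ h₁ h₂ => h₁.mul_left h₂)
      (fun y z x _ _ _ h₁ h₂ => h₁.mul_right h₂)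
      (fun x y _ _ h₁ => h₁.inv_left)
      (fun x y _ _ h₁ => h₁.inv_right) ha hb
  have hne : Subgroup.closure S ≠ ⊤ := by
    intro htop
    obtain ⟨a, b, hab⟩ := hna
    exact hab (hcomm a (htop ▸ Subgroup.mem_top a) b (htop ▸ Subgroup.mem_top b))
  refine ⟨hne, hcomm, ?_⟩
  intro hs
  obtain ⟨a, b, hab⟩ := hna
  have hnt : Nontrivial G := ⟨a * b, b * a, hab⟩
  have := Fintype.ofFinite G
  have hcard : 1 < Fintype.card G := Fintype.one_lt_card
  have hpfac : (Fintype.card G).minFac.Prime := Nat.minFac_prime (by omega)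
  haveI : Fact (Fintype.card G).minFac.Prime := ⟨hpfac⟩
  obtain ⟨g, hg⟩ := exists_prime_orderOf_dvd_card (Fintype.card G).minFac
    (Nat.minFac_dvd _)
  have hgS : g ∈ S := by rw [hS]; simp only [Set.mem_setOf_eq, hg]; exact hpfac
  have hnorm : (Subgroup.closure S).Normal := by
    constructor
    intro n hn c
    have hmap : (Subgroup.closure S).map (MulAut.conj c).toMonoidHom = Subgroup.closure S := by
      rw [MonoidHom.map_closure]
      congr 1
      ext x
      constructor
      · rintro ⟨y, hy, rfl⟩
        have hsc : SemiconjBy c y (c * y * c⁻¹) := by unfold SemiconjBy; group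
        have := hsc.orderOf_eq
        simp only [S, Set.mem_setOf_eq] at hy ⊢
        simpa [MulAut.conj, ← this] using hy
      · intro hx
        refine ⟨c⁻¹ * x * c, ?_, by simp [MulAut.conj]; group⟩
        have : SemiconjBy c (c⁻¹ * x * c) x := by
          unfold SemiconjBy; group
        simpa [S, this.orderOf_eq] using hx
    have : (MulAut.conj c) n ∈ (Subgroup.closure S).map (MulAut.conj c).toMonoidHom :=
      ⟨n, hn, rfl⟩
    rw [hmap] at this
    simpa using this
  rcases hnorm.eq_bot_or_eq_top with hbot | htop
  · have : g ∈ Subgroup.closure S := Subgroup.subset_closure hgS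
    rw [hbot, Subgroup.mem_bot] at this
    rw [this, orderOf_one] at hg
    exact hpfac.one_lt.ne' (hg ▸ rfl)
  · exact hne htop
end

section
/- If G is a finite POEC group with a normal Sylow p-subgroup P, then the quotient G/P is a POEC group. -/
lemma poec_lift {G : Type*} [Group G] [Finite G] {p : ℕ} [Fact p.Prime]
    (P : Sylow p G) (hn : (P : Subgroup G).Normal) (xb : G ⧸ (P : Subgroup G))
    (hq : (orderOf xb).Prime) :
    ∃ x : G, orderOf x = orderOf xb ∧ QuotientGroup.mk x = xb := by
  obtain ⟨q, hqdef⟩ : ∃ q, q = orderOf xb := ⟨_, rfl⟩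
  rw [← hqdef] at hq ⊢
  -- q ≠ p since q divides the index of P
  have hqp : q ≠ p := by
    intro hEq
    have hdvd : orderOf xb ∣ Nat.card (G ⧸ (P : Subgroup G)) := orderOf_dvd_natCard xb
    rw [← Subgroup.index_eq_card, ← hqdef, hEq] at hdvd
    exact P.not_dvd_index hdvd
  obtain ⟨x, hx⟩ := QuotientGroup.mk_surjective xb
  have hxord : q ∣ orderOf x := by
    have := orderOf_map_dvd (QuotientGroup.mk' (P : Subgroup G)) x
    rw [hqdef]
    simpa [hx] using this
  obtain ⟨n, hndef⟩ : ∃ n, n = orderOf x := ⟨_, rfl⟩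
  rw [← hndef] at hxord
  have hn0 : n ≠ 0 := hndef ▸ (orderOf_pos x).ne'
  obtain ⟨m, hmdef⟩ : ∃ m, m = n / q ^ n.factorization q := ⟨_, rfl⟩
  have hmn : m ∣ n := hmdef ▸ Nat.ordCompl_dvd n q
  have hm0 : m ≠ 0 := hmdef ▸ (Nat.ordCompl_pos q hn0).ne'
  have hcop : Nat.Coprime q m := hmdef ▸ Nat.coprime_ordCompl hq hn0
  obtain ⟨x', hx'def⟩ : ∃ x', x' = x ^ m := ⟨_, rfl⟩
  -- order of x' is q ^ (n.factorization q)
  have hordx' : orderOf x' = q ^ n.factorization q := by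
    rw [hx'def, orderOf_pow' x hm0, ← hndef, Nat.gcd_eq_right hmn, hmdef]
    exact Nat.div_div_self (Nat.ordProj_dvd n q) hn0
  -- image of x' has order q
  have himg : (QuotientGroup.mk x' : G ⧸ (P : Subgroup G)) = xb ^ m := by
    rw [hx'def, ← hx]; rfl
  have hordimg : orderOf ((QuotientGroup.mk x' : G ⧸ (P : Subgroup G))) = q := by
    rw [himg, orderOf_pow, ← hqdef, Nat.Coprime.gcd_eq_one hcop, Nat.div_one]
  -- (x')^q lies in P and has q-power order, hence is 1
  have hx'q : x' ^ q = 1 := by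
    have hmem : x' ^ q ∈ (P : Subgroup G) := by
      rw [← QuotientGroup.eq_one_iff]
      have : ((x' ^ q : G) : G ⧸ (P : Subgroup G)) = (QuotientGroup.mk x' : G ⧸ (P : Subgroup G)) ^ q := rfl
      rw [this, ← hordimg]
      exact pow_orderOf_eq_one _
    obtain ⟨k, hk⟩ := P.isPGroup' ⟨x' ^ q, hmem⟩
    have hk' : (x' ^ q) ^ p ^ k = 1 := by
      have := congrArg (Subgroup.subtype (P : Subgroup G)) hk
      simpa using this
    have h1 : orderOf (x' ^ q) ∣ p ^ k := orderOf_dvd_of_pow_eq_one hk'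
    have h2 : orderOf (x' ^ q) ∣ q ^ n.factorization q := by
      have := orderOf_pow_dvd (x := x') q
      rwa [hordx'] at this
    have : orderOf (x' ^ q) = 1 := by
      have := Nat.dvd_gcd h1 h2
      have hcop2 : Nat.Coprime (p ^ k) (q ^ n.factorization q) :=
        Nat.Coprime.pow k (n.factorization q) (((Nat.coprime_primes Fact.out hq).mpr (Ne.symm hqp)))
      exact Nat.eq_one_of_dvd_coprimes hcop2 h1 h2
    exact orderOf_eq_one_iff.mp (by
      have := this
      rwa [orderOf_eq_one_iff] at this)
  -- hence x' has order exactly q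
  have hordx'q : orderOf x' = q := by
    have h1 : orderOf x' ∣ q := orderOf_dvd_of_pow_eq_one hx'q
    have h2 : q ∣ orderOf x' := by
      have := orderOf_map_dvd (QuotientGroup.mk' (P : Subgroup G)) x'
      rw [show (QuotientGroup.mk' (P : Subgroup G)) x' = QuotientGroup.mk x' from rfl,
        hordimg] at this
      exact this
    exact Nat.dvd_antisymm h1 h2
  -- adjust by a power to hit xb exactly
  have hcop' : Nat.Coprime m q := hcop.symm
  obtain ⟨k, hk⟩ := exists_pow_eq_self_of_coprime (x := xb) (n := m) (by rw [← hqdef]; exact hcop.symm)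
  refine ⟨x' ^ k, ?_, ?_⟩
  · have h1 : orderOf (x' ^ k) ∣ q := by
      rw [← hordx'q]; exact orderOf_pow_dvd k
    have h2 : q ∣ orderOf (x' ^ k) := by
      have himg2 : (QuotientGroup.mk (x' ^ k) : G ⧸ (P : Subgroup G)) = xb := by
        have : (QuotientGroup.mk (x' ^ k) : G ⧸ (P : Subgroup G)) = (QuotientGroup.mk x' : G ⧸ (P : Subgroup G)) ^ k := rfl
        rw [this, himg]
        exact hk
      have := orderOf_map_dvd (QuotientGroup.mk' (P : Subgroup G)) (x' ^ k)
      rw [show (QuotientGroup.mk' (P : Subgroup G)) (x' ^ k) = QuotientGroup.mk (x' ^ k)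
        from rfl, himg2, ← hqdef] at this
      exact this
    exact Nat.dvd_antisymm h1 h2
  · have : (QuotientGroup.mk (x' ^ k) : G ⧸ (P : Subgroup G)) = (QuotientGroup.mk x' : G ⧸ (P : Subgroup G)) ^ k := rfl
    rw [this, himg]
    exact hk

theorem stmt_5 {G : Type*} [Group G] [Finite G] (h : POEC G) (p : ℕ) [Fact p.Prime]
    (P : Sylow p G) (hn : (P : Subgroup G).Normal) :
    POEC (G ⧸ (P : Subgroup G)) := by
  intro xb yb hx hy
  obtain ⟨x, hxo, hxm⟩ := poec_lift P hn xb hx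
  obtain ⟨y, hyo, hym⟩ := poec_lift P hn yb hy
  have := (h x y (hxo ▸ hx) (hyo ▸ hy)).map (QuotientGroup.mk' (P : Subgroup G))
  simpa [QuotientGroup.mk'_apply, hxm, hym] using this
end

section
/- If G is a finite non-abelian POEC group, then the order of G is not square-free. -/
section

variable {G : Type*} [Group G]

def primeOrderClosure (G : Type*) [Group G] : Subgroup G :=
  Subgroup.closure {x : G | (orderOf x).Prime}

theorem POEC.isMulCommutative_primeOrderClosure (h : POEC G) :
    IsMulCommutative (primeOrderClosure G) :=
  Subgroup.isMulCommutative_closure fun x hx y hy => h x y hx hy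

theorem dvd_exponent_primeOrderClosure [Finite G] {p : ℕ} (hp : p.Prime)
    (hpG : p ∣ Nat.card G) : p ∣ Monoid.exponent (primeOrderClosure G) := by
  have : Fact p.Prime := ⟨hp⟩
  obtain ⟨x, hx⟩ := exists_prime_orderOf_dvd_card' (G := G) p hpG
  have hmem : x ∈ primeOrderClosure G := Subgroup.subset_closure (hx ▸ hp : (orderOf x).Prime)
  simpa [hx] using Monoid.order_dvd_exponent (⟨x, hmem⟩ : primeOrderClosure G)

theorem card_dvd_exponent_primeOrderClosure [Finite G] (hsf : Squarefree (Nat.card G)) :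
    Nat.card G ∣ Monoid.exponent (primeOrderClosure G) := by
  rw [← Nat.prod_primeFactors_of_squarefree hsf]
  exact Finset.prod_primes_dvd _ (fun p hp => (Nat.prime_of_mem_primeFactors hp).prime)
    fun p hp => dvd_exponent_primeOrderClosure (Nat.prime_of_mem_primeFactors hp)
      (Nat.dvd_of_mem_primeFactors hp)

open scoped IsMulCommutative in
theorem POEC.isCyclic_of_squarefree [Finite G] (h : POEC G) (hsf : Squarefree (Nat.card G)) :
    IsCyclic G := by
  have := h.isMulCommutative_primeOrderClosure
  obtain ⟨g, hg⟩ := Monoid.exists_orderOf_eq_exponent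
    (Monoid.ExponentExists.of_finite (G := primeOrderClosure G))
  refine isCyclic_of_orderOf_eq_card (g : G) (Nat.dvd_antisymm (orderOf_dvd_natCard _) ?_)
  rw [Subgroup.orderOf_coe, hg]
  exact card_dvd_exponent_primeOrderClosure hsf

end

theorem stmt_6 {G : Type*} [Group G] [Finite G] (h : POEC G)
    (hna : ∃ a b : G, a * b ≠ b * a) :
    ¬ Squarefree (Nat.card G) := by
  intro hsf
  have := h.isCyclic_of_squarefree hsf
  obtain ⟨a, b, hab⟩ := hna
  exact hab (mul_comm' a b)
end

section
/- If G is a finite POEC group whose order is divisible by p^2 for at most one prime p, then G is supersolvable. -/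
/-- A group is supersolvable if it has a chain of normal subgroups from `⊥` to `⊤`
with all factors cyclic (each factor `s i.succ / s i.castSucc` is generated by the
image of a single element). -/
def IsSupersolvable (G : Type*) [Group G] : Prop :=
  ∃ (n : ℕ) (s : Fin (n + 1) → Subgroup G),
    s 0 = ⊥ ∧ s (Fin.last n) = ⊤ ∧ (∀ i, (s i).Normal) ∧
    ∀ i : Fin n, s i.castSucc ≤ s i.succ ∧
      ∃ g ∈ s i.succ, ∀ x ∈ s i.succ, ∃ k : ℤ, (g ^ k)⁻¹ * x ∈ s i.castSucc


section ChainAux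

open Subgroup

variable {G : Type*} [Group G]


variable {G : Type*} [Group G]

def SStep (H K : Subgroup G) : Prop :=
  H ≤ K ∧ ∃ g ∈ K, ∀ x ∈ K, ∃ k : ℤ, (g ^ k)⁻¹ * x ∈ H

def SChn (H K : Subgroup G) : Prop :=
  ∃ (n : ℕ) (s : Fin (n + 1) → Subgroup G),
    s 0 = H ∧ s (Fin.last n) = K ∧ (∀ i, (s i).Normal) ∧
    ∀ i : Fin n, SStep (s i.castSucc) (s i.succ)

theorem SChn.refl {H : Subgroup G} (hH : H.Normal) : SChn H H :=
  ⟨0, fun _ => H, rfl, rfl, fun _ => hH, fun i => i.elim0⟩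

theorem SChn.trans {H K L : Subgroup G} (h1 : SChn H K) (h2 : SChn K L) : SChn H L := by
  obtain ⟨n, s, hs0, hsl, hsn, hss⟩ := h1
  obtain ⟨m, t, ht0, htl, htn, hts⟩ := h2
  refine ⟨n + m, fun i =>
    if h : i.val ≤ n then s ⟨i.val, by omega⟩ else t ⟨i.val - n, by omega⟩, ?_, ?_, ?_, ?_⟩
  · dsimp only
    rw [dif_pos (by simp)]
    rw [← hs0]; congr 1
  · by_cases hm : m = 0
    · subst hm
      dsimp only
      rw [dif_pos (by simp [Fin.val_last])]
      rw [Fin.last_zero] at htl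
      rw [← htl, ht0, ← hsl]
      congr 1
    · have hnle : ¬ (Fin.last (n + m)).val ≤ n := by simp [Fin.val_last]; omega
      dsimp only
      rw [dif_neg hnle, ← htl]
      congr 1
      ext
      simp [Fin.val_last]
  · intro i
    dsimp only
    by_cases h : i.val ≤ n
    · rw [dif_pos h]; exact hsn _
    · rw [dif_neg h]; exact htn _
  · intro i
    dsimp only
    have hc : (i.castSucc).val = i.val := rfl
    have hsu : (i.succ).val = i.val + 1 := rfl
    by_cases h1 : i.val + 1 ≤ n
    · have h0 : i.val ≤ n := by omega
      simp only [hc, hsu, dif_pos h1, dif_pos h0]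
      have := hss ⟨i.val, by omega⟩
      convert this using 2 <;> ext <;> simp
    · by_cases h0 : i.val ≤ n
      · have hn : i.val = n := by omega
        have hm : 0 < m := by have := i.isLt; omega
        simp only [hc, hsu, dif_pos h0, dif_neg h1]
        have heq1 : s ⟨i.val, by omega⟩ = K := by rw [← hsl]; congr 1; ext; simp [hn]
        have heq2 : t ⟨i.val + 1 - n, by omega⟩ = t (⟨0, hm⟩ : Fin m).succ := by
          congr 1; ext; simp; omega
        rw [heq1, heq2]
        have := hts ⟨0, hm⟩
        convert this using 2
        rw [← ht0]; congr 1
      · simp only [hc, hsu, dif_neg h1, dif_neg h0]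
        have := hts ⟨i.val - n, by omega⟩
        convert this using 2 <;> ext <;> simp <;> omega

theorem SChn.of_step {H K : Subgroup G} (hH : H.Normal) (hK : K.Normal) (h : SStep H K) :
    SChn H K := by
  refine ⟨1, fun i => if i.val = 0 then H else K, rfl, rfl, ?_, ?_⟩
  · intro i
    dsimp only
    split <;> assumption
  · intro i
    have : i = 0 := Subsingleton.elim _ _
    subst this
    simpa using h

theorem SChn.snoc {H K L : Subgroup G} (h1 : SChn H K) (hK : K.Normal) (hL : L.Normal)
    (h : SStep K L) : SChn H L :=
  h1.trans (SChn.of_step hK hL h)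

theorem SChn.cons {H K L : Subgroup G} (hH : H.Normal) (hK : K.Normal)
    (h : SStep H K) (h1 : SChn K L) : SChn H L :=
  (SChn.of_step hH hK h).trans h1


theorem schn_bot_of_cyclic [Finite G] :
    ∀ (c : ℕ) (N : Subgroup G), Nat.card N = c → N.Normal → IsCyclic N → SChn ⊥ N := by
  intro c
  induction c using Nat.strong_induction_on with
  | _ c IH =>
    intro N hcard hN hcyc
    rcases eq_or_ne N ⊥ with rfl | hbot
    · exact SChn.refl inferInstance
    obtain ⟨gN, hgen⟩ := hcyc.exists_generator
    have hd : Nat.card N = orderOf gN := (orderOf_eq_card_of_forall_mem_zpowers hgen).symm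
    have hd1 : 1 < Nat.card N := by
      rcases Nat.lt_or_ge 1 (Nat.card N) with h | h
      · exact h
      · exact absurd (Subgroup.card_eq_one.mp (by have := Nat.card_pos (α := N); omega)) hbot
    obtain ⟨d, hdd⟩ : ∃ d, Nat.card N = d := ⟨_, rfl⟩
    rw [hdd] at hd hd1 hcard
    have hqp : (d.minFac).Prime := Nat.minFac_prime (by omega)
    obtain ⟨q, hq⟩ : ∃ q, d.minFac = q := ⟨_, rfl⟩
    rw [hq] at hqp
    have hqd : q ∣ d := hq ▸ Nat.minFac_dvd d
    obtain ⟨e, he⟩ : ∃ e, d / q = e := ⟨_, rfl⟩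
    have hde : d = q * e := by rw [← he, Nat.mul_div_cancel' hqd]
    have he1 : 0 < e := by
      rcases Nat.eq_zero_or_pos e with h | h
      · rw [h, mul_zero] at hde; omega
      · exact h
    have helt : e < d := by rw [← he]; exact Nat.div_lt_self (by omega) hqp.one_lt
    have hgNd : gN ^ ((d : ℤ)) = 1 := by
      rw [zpow_natCast, hd]; exact pow_orderOf_eq_one gN
    set K : Subgroup N := Subgroup.zpowers (gN ^ q) with hK
    set M : Subgroup G := K.map N.subtype with hM
    have hMN : M ≤ N := Subgroup.map_subtype_le K
    have hMe : ∀ x : G, x ∈ M ↔ x ∈ N ∧ x ^ e = 1 := by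
      intro x
      constructor
      · rintro ⟨y, hy, rfl⟩
        refine ⟨y.2, ?_⟩
        obtain ⟨k, hk⟩ := hy
        have h1 : (y : N) ^ e = 1 := by
          rw [← hk]
          show ((gN ^ q) ^ k) ^ (e : ℕ) = 1
          rw [← zpow_natCast ((gN ^ q) ^ k) e, ← zpow_mul, ← zpow_natCast gN q, ← zpow_mul]
          have hexp : (q : ℤ) * (k * (e : ℤ)) = (d : ℤ) * k := by push_cast [hde]; ring
          rw [hexp, zpow_mul, hgNd, one_zpow]
        have := congrArg (N.subtype) h1
        simpa using this
      · rintro ⟨hxN, hxe⟩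
        obtain ⟨k, hk⟩ := hgen ⟨x, hxN⟩
        have hxe' : (⟨x, hxN⟩ : N) ^ e = 1 := by ext; simpa using hxe
        rw [← hk] at hxe'
        show _ ∈ K.map N.subtype
        rw [← zpow_natCast (gN ^ k) e, ← zpow_mul] at hxe'
        have hdvd : ((orderOf gN : ℤ)) ∣ k * e := orderOf_dvd_iff_zpow_eq_one.mpr hxe'
        rw [← hd] at hdvd
        obtain ⟨t, ht⟩ := hdvd
        have hq_dvd : (q : ℤ) ∣ k := by
          have he0 : (e : ℤ) ≠ 0 := by exact_mod_cast (by omega : e ≠ 0)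
          refine ⟨t, ?_⟩
          have : k * e = ((q : ℤ) * t) * e := by rw [ht]; push_cast [hde]; ring
          exact mul_right_cancel₀ he0 this
        obtain ⟨u, hu⟩ := hq_dvd
        refine ⟨(gN ^ q) ^ u, ⟨u, rfl⟩, ?_⟩
        have h2 : (gN ^ q) ^ u = (⟨x, hxN⟩ : N) := by
          rw [← hk, hu, ← zpow_natCast gN q, ← zpow_mul]
        rw [h2]
        rfl
    have hMnormal : M.Normal := by
      constructor
      intro x hx c
      rw [hMe] at hx ⊢
      refine ⟨hN.conj_mem x hx.1 c, ?_⟩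
      have hcx : c * x * c⁻¹ = (MulAut.conj c) x := rfl
      rw [hcx, ← map_pow, hx.2, map_one]
    have hMcyc : IsCyclic M := by
      have : IsCyclic K := Subgroup.isCyclic K
      exact isCyclic_of_surjective
        (Subgroup.equivMapOfInjective K N.subtype N.subtype_injective).toMonoidHom
        (Subgroup.equivMapOfInjective K N.subtype N.subtype_injective).surjective
    have hcard_lt : Nat.card M < d := by
      have hle : Nat.card M ≤ Nat.card N := Subgroup.card_le_of_le hMN
      rcases lt_or_eq_of_le hle with h | h
      · omega
      · exfalso
        have hMNeq : M = N := Subgroup.eq_of_le_of_card_ge hMN h.ge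
        have hgNM : (gN : G) ∈ M := by rw [hMNeq]; exact gN.2
        rw [hMe] at hgNM
        have hgNe : gN ^ e = 1 := by ext; simpa using hgNM.2
        have := Nat.le_of_dvd (by omega) (hd ▸ orderOf_dvd_of_pow_eq_one hgNe)
        omega
    have hchain : SChn ⊥ M := IH _ (hcard ▸ hcard_lt) M rfl hMnormal hMcyc
    refine hchain.snoc hMnormal hN ⟨hMN, (gN : G), gN.2, ?_⟩
    intro x hx
    obtain ⟨k, hk⟩ := hgen ⟨x, hx⟩
    refine ⟨k, ?_⟩
    have hgk : ((gN : G)) ^ k = x := by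
      have := congrArg N.subtype hk
      simpa using this
    rw [← hgk]
    simpa using M.one_mem

theorem schn_top_of_pgroup [Finite G] (p : ℕ) (hpp : p.Prime) :
    ∀ (c : ℕ) (N : Subgroup G) [N.Normal], Nat.card (G ⧸ N) = c →
      IsPGroup p (G ⧸ N) → SChn N ⊤ := by
  intro c
  induction c using Nat.strong_induction_on with
  | _ c IH =>
    intro N hN hcard hp
    rcases eq_or_ne N ⊤ with rfl | htop
    · exact SChn.refl inferInstance
    have hnt : Nontrivial (G ⧸ N) := by
      rcases Nat.lt_or_ge 1 (Nat.card (G ⧸ N)) with h | h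
      · exact Finite.one_lt_card_iff_nontrivial.mp h
      · exfalso
        apply htop
        have h1 : Nat.card (G ⧸ N) = 1 := by have := Nat.card_pos (α := G ⧸ N); omega
        have hsub : Subsingleton (G ⧸ N) := (Nat.card_eq_one_iff_unique.mp h1).1
        ext x
        simp only [Subgroup.mem_top, iff_true]
        rw [← QuotientGroup.eq_one_iff]
        exact Subsingleton.elim _ _
    haveI : Fact p.Prime := ⟨hpp⟩
    have hcent : Nontrivial (Subgroup.center (G ⧸ N)) := hp.center_nontrivial
    obtain ⟨⟨z0, hz0c⟩, hz0ne⟩ := exists_ne (1 : Subgroup.center (G ⧸ N))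
    have hz0ne' : z0 ≠ 1 := by
      intro hh; apply hz0ne; ext; exact hh
    obtain ⟨k, hk⟩ := hp z0
    have hno : orderOf z0 ∣ p ^ k := orderOf_dvd_of_pow_eq_one hk
    obtain ⟨j, hjk, hj⟩ := (Nat.dvd_prime_pow hpp).mp hno
    have hj1 : 1 ≤ j := by
      rcases Nat.eq_zero_or_pos j with h0 | h0
      · exfalso
        rw [h0, pow_zero, orderOf_eq_one_iff] at hj
        exact hz0ne' hj
      · exact h0
    set z : G ⧸ N := z0 ^ (p ^ (j - 1)) with hzdef
    have hzne : z ≠ 1 := by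
      intro hh
      have hdvd := orderOf_dvd_of_pow_eq_one hh
      rw [hj] at hdvd
      have := (Nat.pow_dvd_pow_iff_le_right hpp.one_lt).mp hdvd
      omega
    have hzp : z ^ p = 1 := by
      rw [hzdef, ← pow_mul, ← pow_succ, Nat.sub_add_cancel hj1, ← hj, pow_orderOf_eq_one]
    have hzc : z ∈ Subgroup.center (G ⧸ N) := pow_mem hz0c _
    have hzcomm : ∀ g : G ⧸ N, g * z = z * g := fun g =>
      ((Subgroup.mem_center_iff.mp hzc) g)
    set M : Subgroup G := (Subgroup.zpowers z).comap (QuotientGroup.mk' N) with hM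
    have hNM : N ≤ M := by
      intro x hx
      have h1 : (QuotientGroup.mk' N) x = 1 := (QuotientGroup.eq_one_iff x).mpr hx
      simp only [hM, Subgroup.mem_comap, h1]
      exact one_mem _
    have hzn : (Subgroup.zpowers z).Normal := by
      constructor
      intro n hn g
      obtain ⟨jj, hjj⟩ := hn
      have hcomm : Commute g (z ^ jj) := Commute.zpow_right (hzcomm g) jj
      have : g * (z ^ jj) * g⁻¹ = z ^ jj := by
        rw [hcomm.eq, mul_assoc, mul_inv_cancel, mul_one]
      simp only [← hjj]
      rw [this]
      exact ⟨jj, rfl⟩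
    have hMnormal : M.Normal := hzn.comap _
    -- a preimage g of z
    obtain ⟨g, hg⟩ := QuotientGroup.mk'_surjective N z
    have hgM : g ∈ M := by
      simp only [hM, Subgroup.mem_comap, hg]
      exact ⟨1, by simp⟩
    have hstep : SStep N M := by
      refine ⟨hNM, g, hgM, ?_⟩
      intro x hx
      obtain ⟨kk, hkk0⟩ := hx
      have hkk : z ^ kk = (QuotientGroup.mk' N) x := hkk0
      refine ⟨kk, ?_⟩
      rw [← QuotientGroup.eq_one_iff]
      have : ((QuotientGroup.mk' N) ((g ^ kk)⁻¹ * x) : G ⧸ N) = 1 := by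
        rw [map_mul, map_inv, map_zpow, hg, hkk]
        simp
      exact this
    -- N < M strictly
    have hgnotN : g ∉ N := by
      intro hh
      apply hzne
      rw [← hg]
      exact (QuotientGroup.eq_one_iff g).mpr hh
    have hlt : Nat.card N < Nat.card M := by
      have hle := Subgroup.card_le_of_le hNM
      rcases lt_or_eq_of_le hle with h | h
      · exact h
      · exact absurd (Subgroup.eq_of_le_of_card_ge hNM h.ge ▸ hgM : g ∈ N) hgnotN
    -- quotient by M is a smaller p-group
    have hMle : N ≤ Subgroup.comap (MonoidHom.id G) M := hNM
    set φ : G ⧸ N →* G ⧸ M := QuotientGroup.map N M (MonoidHom.id G) hMle with hφ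
    have hφsurj : Function.Surjective φ := by
      intro y
      obtain ⟨x, hx⟩ := QuotientGroup.mk'_surjective M y
      exact ⟨QuotientGroup.mk' N x, by rw [← hx]; rfl⟩
    have hpM : IsPGroup p (G ⧸ M) := hp.of_surjective φ hφsurj
    have hcards : Nat.card (G ⧸ M) < c := by
      have h1 : Nat.card G = Nat.card (G ⧸ N) * Nat.card N :=
        Subgroup.card_eq_card_quotient_mul_card_subgroup N
      have h2 : Nat.card G = Nat.card (G ⧸ M) * Nat.card M :=
        Subgroup.card_eq_card_quotient_mul_card_subgroup M
      have hNpos : 0 < Nat.card N := Nat.card_pos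
      have hMpos : 0 < Nat.card M := Nat.card_pos
      have hQpos : 0 < Nat.card (G ⧸ M) := Nat.card_pos
      rw [← hcard]
      by_contra hh
      push_neg at hh
      have : Nat.card (G ⧸ N) * Nat.card N < Nat.card (G ⧸ M) * Nat.card M :=
        Nat.mul_lt_mul_of_le_of_lt hh hlt hQpos
      omega
    haveI := hMnormal
    exact SChn.cons hN hMnormal hstep (IH _ hcards M rfl hpM)

end ChainAux

theorem sqfree_dvd_of_prime_dvd {n m : ℕ} (hn : Squarefree n) (hm : m ≠ 0)
    (h : ∀ p, p.Prime → p ∣ n → p ∣ m) : n ∣ m := by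
  have hn0 : n ≠ 0 := hn.ne_zero
  rw [← Nat.factorization_le_iff_dvd hn0 hm]
  intro p
  rcases Nat.eq_zero_or_pos (n.factorization p) with h0 | h0
  · simp [h0]
  · have hp : p.Prime := by
      by_contra hpp
      rw [Nat.factorization_eq_zero_of_not_prime _ hpp] at h0
      omega
    have hpn : p ∣ n := Nat.dvd_of_factorization_pos (by omega)
    have hpm : p ∣ m := h p hp hpn
    have h1 : n.factorization p ≤ 1 := hn.natFactorization_le_one p
    have h2 : 1 ≤ m.factorization p := (Nat.Prime.dvd_iff_one_le_factorization hp hm).mp hpm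
    omega

theorem stmt_7 {G : Type*} [Group G] [Finite G] (h : POEC G)
    (hsq : ∀ p q : ℕ, p.Prime → q.Prime → p ^ 2 ∣ Nat.card G → q ^ 2 ∣ Nat.card G → p = q) :
    IsSupersolvable G := by
  classical
  set S : Set G := {x : G | (orderOf x).Prime ∧ ¬ (orderOf x) ^ 2 ∣ Nat.card G} with hS
  set N : Subgroup G := Subgroup.closure S with hN
  have hcomm : ∀ x ∈ S, ∀ y ∈ S, x * y = y * x := fun x hx y hy => h x y hx.1 hy.1
  letI : CommGroup N := Subgroup.closureCommGroupOfComm hcomm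
  have hNcomm : ∀ x ∈ N, ∀ y ∈ N, x * y = y * x := by
    intro x hx y hy
    have := mul_comm (⟨x, hx⟩ : N) ⟨y, hy⟩
    exact congrArg Subtype.val this
  -- N is normal
  have hNnormal : N.Normal := by
    constructor
    intro n hn g
    have himg : (MulAut.conj g).toMonoidHom '' S = S := by
      ext x
      simp only [Set.mem_image]
      constructor
      · rintro ⟨y, hy, rfl⟩
        have : orderOf ((MulAut.conj g).toMonoidHom y) = orderOf y :=
          orderOf_injective _ (MulAut.conj g).injective y
        exact ⟨this ▸ hy.1, this ▸ hy.2⟩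
      · intro hx
        refine ⟨(MulAut.conj g).symm x, ?_, by simp [MulAut.conj]; group⟩
        have : orderOf ((MulAut.conj g).symm x) = orderOf x :=
          orderOf_injective (MulAut.conj g).symm.toMonoidHom (MulAut.conj g).symm.injective x
        exact ⟨this ▸ hx.1, this ▸ hx.2⟩
    have : g * n * g⁻¹ = (MulAut.conj g).toMonoidHom n := by simp [MulAut.conj]
    rw [this]
    have hmem : (MulAut.conj g).toMonoidHom n ∈ N.map (MulAut.conj g).toMonoidHom :=
      Subgroup.mem_map_of_mem _ hn
    rwa [hN, MonoidHom.map_closure, himg] at hmem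
  -- order properties of elements of N
  have horder : ∀ x ∈ N, Squarefree (orderOf x) ∧
      ∀ r : ℕ, r.Prime → r ∣ orderOf x → ¬ r ^ 2 ∣ Nat.card G := by
    intro x hx
    induction hx using Subgroup.closure_induction with
    | mem x hxS =>
      refine ⟨hxS.1.squarefree, fun r hr hrd => ?_⟩
      rw [(Nat.prime_dvd_prime_iff_eq hr hxS.1).mp hrd]
      exact hxS.2
    | one =>
      refine ⟨by simp [squarefree_one], fun r hr hrd => ?_⟩
      simp only [orderOf_one, Nat.dvd_one] at hrd
      exact absurd hrd hr.ne_one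
    | mul x y hxm hym ihx ihy =>
      have hcxy : Commute x y := hNcomm x hxm y hym
      have hdvd : orderOf (x * y) ∣ Nat.lcm (orderOf x) (orderOf y) :=
        hcxy.orderOf_mul_dvd_lcm
      have hx0 : orderOf x ≠ 0 := ihx.1.ne_zero
      have hy0 : orderOf y ≠ 0 := ihy.1.ne_zero
      have hlcm_sf : Squarefree (Nat.lcm (orderOf x) (orderOf y)) := by
        apply Nat.squarefree_of_factorization_le_one (Nat.lcm_ne_zero hx0 hy0)
        intro p
        rw [Nat.factorization_lcm hx0 hy0]
        simp only [Finsupp.sup_apply]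
        exact sup_le (ihx.1.natFactorization_le_one p) (ihy.1.natFactorization_le_one p)
      refine ⟨hlcm_sf.squarefree_of_dvd hdvd, fun r hr hrd => ?_⟩
      have : r ∣ Nat.lcm (orderOf x) (orderOf y) := hrd.trans hdvd
      have : r ∣ orderOf x * orderOf y := this.trans (Nat.lcm_dvd_mul _ _)
      rcases (Nat.Prime.dvd_mul hr).mp this with h | h
      · exact ihx.2 r hr h
      · exact ihy.2 r hr h
    | inv x hxm ihx =>
      simpa [orderOf_inv] using ihx
  -- no prime whose square divides |G| divides |N| squared-ly; |N| squarefree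
  have hprimeN : ∀ r : ℕ, r.Prime → r ∣ Nat.card N → ¬ r ^ 2 ∣ Nat.card G := by
    intro r hr hrd
    haveI : Fact r.Prime := ⟨hr⟩
    obtain ⟨y, hy⟩ := exists_prime_orderOf_dvd_card' (G := N) r hrd
    have hyo : orderOf (y : G) = r := by rw [Subgroup.orderOf_coe]; exact hy
    exact (horder (y : G) y.2).2 r hr (hyo ▸ dvd_rfl)
  have hNsf : Squarefree (Nat.card N) := by
    rw [Nat.squarefree_iff_prime_squarefree]
    intro r hr hrr
    have hrN : r ∣ Nat.card N := dvd_trans (Dvd.intro r rfl) hrr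
    apply hprimeN r hr hrN
    have : r * r ∣ Nat.card G := hrr.trans (Subgroup.card_subgroup_dvd_card N)
    rwa [← sq] at this
  -- N is cyclic
  have hNcyc : IsCyclic N := by
    apply IsCyclic.of_exponent_eq_card
    apply Nat.dvd_antisymm Group.exponent_dvd_nat_card
    apply sqfree_dvd_of_prime_dvd hNsf Monoid.exponent_ne_zero_of_finite
    intro r hr hrd
    haveI : Fact r.Prime := ⟨hr⟩
    obtain ⟨y, hy⟩ := exists_prime_orderOf_dvd_card' (G := N) r hrd
    exact hy ▸ Monoid.order_dvd_exponent y
  haveI := hNnormal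
  -- every element of prime order r with r^2 ∤ |G| lies in N; so |G/N| has only "square" primes
  have hQprime : ∀ r : ℕ, r.Prime → r ∣ Nat.card (G ⧸ N) → r ^ 2 ∣ Nat.card G := by
    intro r hr hrd
    by_contra hr2
    have hcardeq : Nat.card G = Nat.card (G ⧸ N) * Nat.card N :=
      Subgroup.card_eq_card_quotient_mul_card_subgroup N
    have hrG : r ∣ Nat.card G := hrd.trans ⟨Nat.card N, hcardeq⟩
    haveI : Fact r.Prime := ⟨hr⟩
    obtain ⟨x, hx⟩ := exists_prime_orderOf_dvd_card' (G := G) r hrG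
    have hxS : x ∈ S := ⟨hx ▸ hr, hx ▸ hr2⟩
    have hxN : x ∈ N := Subgroup.subset_closure hxS
    have hrN : r ∣ Nat.card N := by
      have : orderOf (⟨x, hxN⟩ : N) = r := by rw [Subgroup.orderOf_mk]; exact hx
      exact this ▸ orderOf_dvd_natCard (⟨x, hxN⟩ : N)
    have : r ^ 2 ∣ Nat.card G := by
      rw [hcardeq, sq]
      exact mul_dvd_mul hrd hrN
    exact hr2 this
  -- conclude
  have hchain1 : SChn ⊥ N := schn_bot_of_cyclic _ N rfl hNnormal hNcyc
  have hchain2 : SChn N ⊤ := by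
    rcases eq_or_ne (Nat.card (G ⧸ N)) 1 with h1 | h1
    · have hsub : Subsingleton (G ⧸ N) := (Nat.card_eq_one_iff_unique.mp h1).1
      have hNtop : N = ⊤ := by
        ext x
        simp only [Subgroup.mem_top, iff_true]
        rw [← QuotientGroup.eq_one_iff]
        exact Subsingleton.elim _ _
      rw [hNtop]
      exact SChn.refl inferInstance
    · have hc0 : Nat.card (G ⧸ N) ≠ 0 := Nat.card_pos.ne'
      set p : ℕ := (Nat.card (G ⧸ N)).minFac with hp
      have hpp : p.Prime := Nat.minFac_prime h1
      have hppow : Nat.card (G ⧸ N) = p ^ (Nat.card (G ⧸ N)).primeFactorsList.length :=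
        Nat.eq_prime_pow_of_unique_prime_dvd hc0 (fun {q} hq hqd =>
          hsq q p hq hpp (hQprime q hq hqd) (hQprime p hpp (Nat.minFac_dvd _)))
      exact schn_top_of_pgroup p hpp _ N rfl (IsPGroup.of_card hppow)
  obtain ⟨n, s, h1, h2, h3, h4⟩ := hchain1.trans hchain2
  exact ⟨n, s, h1, h2, h3, fun i => ⟨(h4 i).1, (h4 i).2⟩⟩
end

section
/- If G is a finite POEC group such that the index [G : P[G]] is a power of a prime, then the center of G is non-trivial. -/
theorem stmt_11 {G : Type*} [Group G] [Finite G] (h : POEC G)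
    (hpp : IsPrimePow (Subgroup.closure {x : G | (orderOf x).Prime}).index) :
    Subgroup.center G ≠ ⊥ := by
  classical
  obtain ⟨p, k, hp, hk, hpk⟩ := hpp
  haveI : Fact p.Prime := ⟨hp.nat_prime⟩
  set P := Subgroup.closure {x : G | (orderOf x).Prime} with hPdef
  obtain ⟨S⟩ : Nonempty (Sylow p G) := inferInstance
  -- the Sylow subgroup is nontrivial
  have hdvdG : p ∣ Nat.card G := by
    refine dvd_trans ?_ P.index_dvd_card
    rw [← hpk]; exact dvd_pow_self p hk.ne'
  haveI : Nontrivial ↥(S : Subgroup G) := by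
    rw [← Finite.one_lt_card_iff_nontrivial, Sylow.card_eq_multiplicity]
    have h1 : 1 ≤ (Nat.card G).factorization p := by
      exact Nat.Prime.factorization_pos_of_dvd (Fact.out) (Nat.card_pos).ne' hdvdG
    calc 1 < p := hp.nat_prime.one_lt
      _ ≤ p ^ (Nat.card G).factorization p := Nat.le_self_pow (by omega) p
  -- get an element of order p in the center of the Sylow subgroup
  haveI : Nontrivial ↥(Subgroup.center ↥(S : Subgroup G)) := S.isPGroup'.center_nontrivial
  have hZp : IsPGroup p ↥(Subgroup.center ↥(S : Subgroup G)) :=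
    S.isPGroup'.to_subgroup _
  have hdvdZ : p ∣ Nat.card ↥(Subgroup.center ↥(S : Subgroup G)) := by
    obtain ⟨n, hn0, hn⟩ := hZp.nontrivial_iff_card.mp inferInstance
    exact hn ▸ dvd_pow_self p hn0.ne'
  haveI : Fintype ↥(Subgroup.center ↥(S : Subgroup G)) := Fintype.ofFinite _
  rw [Nat.card_eq_fintype_card] at hdvdZ
  obtain ⟨g, hg⟩ := exists_prime_orderOf_dvd_card p hdvdZ
  set z : G := ((g : ↥(S : Subgroup G)) : G) with hzdef
  have hzS : z ∈ (S : Subgroup G) := (g : ↥(S : Subgroup G)).2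
  have hordz : orderOf z = p := by
    calc orderOf z
        = orderOf (g : ↥(S : Subgroup G)) :=
          orderOf_injective (S : Subgroup G).subtype (Subgroup.subtype_injective _) _
      _ = orderOf g :=
          orderOf_injective (Subgroup.center ↥(S : Subgroup G)).subtype
            (Subgroup.subtype_injective _) _
      _ = p := hg
  have hzprime : (orderOf z).Prime := hordz ▸ hp.nat_prime
  -- z centralizes P
  have hPle : P ≤ Subgroup.centralizer {z} := by
    rw [hPdef, Subgroup.closure_le]
    intro x hx
    rw [SetLike.mem_coe, Subgroup.mem_centralizer_iff]
    rintro y rfl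
    exact (h z x hzprime hx).eq
  -- z centralizes S
  have hSle : (S : Subgroup G) ≤ Subgroup.centralizer {z} := by
    intro s hs
    rw [Subgroup.mem_centralizer_iff]
    rintro y rfl
    have := Subgroup.mem_center_iff.mp g.2 ⟨s, hs⟩
    exact congrArg (Subgroup.subtype _) this.symm
  -- P ⊔ S = ⊤
  have htop : P ⊔ (S : Subgroup G) = ⊤ := by
    rw [← Subgroup.index_eq_one]
    have h1 : (P ⊔ (S : Subgroup G)).index ∣ p ^ k := by
      rw [hpk]; exact Subgroup.index_dvd_of_le le_sup_left
    have h2 : (P ⊔ (S : Subgroup G)).index ∣ (S : Subgroup G).index :=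
      Subgroup.index_dvd_of_le le_sup_right
    obtain ⟨j, hj, hje⟩ := (Nat.dvd_prime_pow hp.nat_prime).mp h1
    rcases Nat.eq_zero_or_pos j with rfl | hj0
    · simpa using hje
    · exfalso
      exact S.not_dvd_index ((hje ▸ dvd_pow_self p hj0.ne').trans h2)
  -- hence z is central
  have hzc : z ∈ Subgroup.center G := by
    have : Subgroup.centralizer {z} = ⊤ :=
      top_le_iff.mp (htop ▸ sup_le hPle hSle)
    exact Subgroup.centralizer_eq_top_iff_subset.mp this rfl
  intro hbot
  rw [hbot, Subgroup.mem_bot] at hzc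
  rw [hzc, orderOf_one] at hordz
  exact hp.nat_prime.ne_one hordz.symm
end

section
/- If G is a finite POEC group of order p1 · p2^{a2} · ... · pk^{ak} where p1 is a prime appearing to the first power and p_i does not divide p1 − 1 for all i, then the center of G is non-trivial; in fact the subgroup G_{p1} generated by elements of order p1 is contained in Z(G). -/
theorem stmt_12 {G : Type*} [Group G] [Finite G] (h : POEC G) (p₁ : ℕ)
    (hp₁ : p₁.Prime) (hdvd : p₁ ∣ Nat.card G) (hsq : ¬ p₁ ^ 2 ∣ Nat.card G)
    (hcond : ∀ q : ℕ, q.Prime → q ∣ Nat.card G → ¬ q ∣ (p₁ - 1)) :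
    Subgroup.closure {x : G | orderOf x = p₁} ≤ Subgroup.center G ∧
    Subgroup.center G ≠ ⊥ := by
  haveI : Fact p₁.Prime := ⟨hp₁⟩
  set S : Set G := {x : G | orderOf x = p₁} with hS
  set N : Subgroup G := Subgroup.closure S with hN
  obtain ⟨g, hg⟩ := exists_prime_orderOf_dvd_card' p₁ hdvd
  have hgS : g ∈ S := hg
  have hgN : g ∈ N := Subgroup.subset_closure hgS
  -- elements of N commute with elements of S
  have hcommS : ∀ y ∈ S, ∀ x ∈ N, Commute x y := by
    intro y hy x hx
    induction hx using Subgroup.closure_induction with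
    | mem z hz => exact h z y (by rw [hz]; exact hp₁) (by rw [hy]; exact hp₁)
    | one => exact Commute.one_left y
    | mul a b ha hb iha ihb => exact iha.mul_left ihb
    | inv a ha iha => exact iha.inv_left
  -- N is commutative
  have hcomm : ∀ x ∈ N, ∀ y ∈ N, Commute x y := by
    intro x hx y hy
    induction hy using Subgroup.closure_induction with
    | mem z hz => exact hcommS z hz x hx
    | one => exact Commute.one_right x
    | mul a b ha hb iha ihb => exact iha.mul_right ihb
    | inv a ha iha => exact iha.inv_right
  -- every element of N has p₁-th power 1
  have hpow : ∀ x ∈ N, x ^ p₁ = 1 := by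
    intro x hx
    induction hx using Subgroup.closure_induction with
    | mem z hz => rw [← hz]; exact pow_orderOf_eq_one z
    | one => exact one_pow p₁
    | mul a b ha hb iha ihb =>
        rw [(hcomm a ha b hb).mul_pow, iha, ihb, one_mul]
    | inv a ha iha => rw [inv_pow, iha, inv_one]
  -- N is a p₁-group
  have hpgroup : IsPGroup p₁ N := by
    intro x
    exact ⟨1, by ext; simpa using hpow (x : G) x.2⟩
  -- the cardinality of N is p₁
  have hcardN : Nat.card N = p₁ := by
    obtain ⟨n, hn⟩ := IsPGroup.iff_card.mp hpgroup
    have hdvdN : Nat.card N ∣ Nat.card G := Subgroup.card_subgroup_dvd_card N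
    have hp₁dvd : p₁ ∣ Nat.card N := by
      have : orderOf (⟨g, hgN⟩ : N) = p₁ := by
        rw [← hg]; exact (Subgroup.orderOf_mk g hgN)
      rw [← this]; exact orderOf_dvd_natCard _
    have hn1 : n = 1 := by
      rcases n with _ | _ | n
      · rw [pow_zero] at hn; rw [hn] at hp₁dvd
        exact absurd (Nat.le_of_dvd one_pos hp₁dvd) (not_le_of_gt hp₁.one_lt)
      · rfl
      · exfalso
        apply hsq
        calc p₁ ^ 2 ∣ p₁ ^ (n + 2) := pow_dvd_pow p₁ (by omega)
        _ = Nat.card N := hn.symm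
        _ ∣ Nat.card G := hdvdN
    rw [hn, hn1, pow_one]
  -- N is normal
  have hnormal : N.Normal := by
    constructor
    intro x hx y
    induction hx using Subgroup.closure_induction with
    | mem z hz =>
        apply Subgroup.subset_closure
        show orderOf (y * z * y⁻¹) = p₁
        have : y * z * y⁻¹ = (MulAut.conj y) z := rfl
        rw [this, MulEquiv.orderOf_eq]; exact hz
    | one => simpa using N.one_mem
    | mul a b ha hb iha ihb =>
        have : y * (a * b) * y⁻¹ = (y * a * y⁻¹) * (y * b * y⁻¹) := by group
        rw [this]; exact N.mul_mem iha ihb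
    | inv a ha iha =>
        have : y * a⁻¹ * y⁻¹ = (y * a * y⁻¹)⁻¹ := by group
        rw [this]; exact N.inv_mem iha
  haveI := hnormal
  haveI : IsCyclic N := isCyclic_of_prime_card hcardN
  -- coprimality
  have hcop : Nat.Coprime (Nat.card G) (p₁ - 1) := by
    by_contra hc
    have hgcd : Nat.gcd (Nat.card G) (p₁ - 1) ≠ 1 := hc
    have hpos : Nat.gcd (Nat.card G) (p₁ - 1) ≠ 0 := by
      intro h0
      have := Nat.eq_zero_of_gcd_eq_zero_left h0
      exact absurd this (Nat.card_pos (α := G)).ne'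
    set d := Nat.gcd (Nat.card G) (p₁ - 1)
    have hq : d.minFac.Prime := Nat.minFac_prime hgcd
    exact hcond d.minFac hq
      ((d.minFac_dvd).trans (Nat.gcd_dvd_left _ _))
      ((d.minFac_dvd).trans (Nat.gcd_dvd_right _ _))
  -- conjugation acts trivially on N
  have hconj : ∀ y : G, (MulAut.conjNormal y : MulAut N) = 1 := by
    intro y
    rw [← orderOf_eq_one_iff]
    have h1 : orderOf (MulAut.conjNormal y : MulAut N) ∣ Nat.card G :=
      (orderOf_map_dvd (MulAut.conjNormal : G →* MulAut N) y).trans (orderOf_dvd_natCard y)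
    have h2 : orderOf (MulAut.conjNormal y : MulAut N) ∣ p₁ - 1 := by
      have : orderOf (MulAut.conjNormal y : MulAut N) ∣ Nat.card (MulAut N) :=
        orderOf_dvd_natCard _
      rwa [IsCyclic.card_mulAut, hcardN, Nat.totient_prime hp₁] at this
    exact Nat.eq_one_of_dvd_coprimes hcop h1 h2
  -- N is contained in the center
  have hle : N ≤ Subgroup.center G := by
    intro x hx
    rw [Subgroup.mem_center_iff]
    intro y
    have := congrArg (fun f : MulAut N => ((f ⟨x, hx⟩ : N) : G)) (hconj y)
    simp only [MulAut.conjNormal_apply, MulAut.one_apply] at this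
    calc y * x = y * x * y⁻¹ * y := by group
    _ = x * y := by rw [this]
  refine ⟨hle, ?_⟩
  intro hbot
  have : g ∈ Subgroup.center G := hle hgN
  rw [hbot, Subgroup.mem_bot] at this
  rw [this, orderOf_one] at hg
  exact absurd hg.symm hp₁.one_lt.ne'
end

section
/- If G is a finite POEC group whose order is p1 · p2^{a2} · ... · pk^{ak} with p1 the smallest prime divisor of |G| appearing to the first power, then G_{p1} is contained in the center of G. -/
theorem stmt_13 {G : Type*} [Group G] [Finite G] (h : POEC G) (p₁ : ℕ)
    (hp₁ : p₁.Prime) (hdvd : p₁ ∣ Nat.card G) (hsq : ¬ p₁ ^ 2 ∣ Nat.card G)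
    (hsmall : ∀ q : ℕ, q.Prime → q ∣ Nat.card G → p₁ ≤ q) :
    Subgroup.closure {x : G | orderOf x = p₁} ≤ Subgroup.center G := by
  haveI : Fact p₁.Prime := ⟨hp₁⟩
  set S : Set G := {x : G | orderOf x = p₁} with hS
  set N : Subgroup G := Subgroup.closure S with hNdef
  -- conjugation preserves S
  have horder_conj : ∀ (g x : G), orderOf (g * x * g⁻¹) = orderOf x := by
    intro g x
    exact (orderOf_injective (MulAut.conj g).toMonoidHom (MulAut.conj g).injective x)
  -- N is normal
  haveI hnormal : N.Normal := by
    constructor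
    intro n hn g
    induction hn using Subgroup.closure_induction with
    | mem x hx =>
      exact Subgroup.subset_closure (by simpa [hS, horder_conj g x] using hx)
    | one => simpa using Subgroup.one_mem N
    | mul x y hx hy ihx ihy =>
      have : g * (x * y) * g⁻¹ = (g * x * g⁻¹) * (g * y * g⁻¹) := by group
      rw [this]; exact Subgroup.mul_mem N ihx ihy
    | inv x hx ihx =>
      have : g * x⁻¹ * g⁻¹ = (g * x * g⁻¹)⁻¹ := by group
      rw [this]; exact Subgroup.inv_mem N ihx
  -- elements of N pairwise commute
  have hcommS : ∀ a ∈ S, ∀ b ∈ N, Commute a b := by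
    intro a ha b hb
    induction hb using Subgroup.closure_induction with
    | mem y hy => exact h a y (ha ▸ hp₁) (hy ▸ hp₁)
    | one => exact Commute.one_right a
    | mul x y _ _ ihx ihy => exact ihx.mul_right ihy
    | inv x _ ihx => exact ihx.inv_right
  have hcomm : ∀ a ∈ N, ∀ b ∈ N, Commute a b := by
    intro a ha b hb
    induction ha using Subgroup.closure_induction with
    | mem x hx => exact hcommS x hx b hb
    | one => exact Commute.one_left b
    | mul x y _ _ ihx ihy => exact ihx.mul_left ihy
    | inv x _ ihx => exact ihx.inv_left
  -- every element of N has p₁-th power 1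
  have hpow : ∀ n ∈ N, n ^ p₁ = 1 := by
    intro n hn
    induction hn using Subgroup.closure_induction with
    | mem x hx => rw [← hx]; exact pow_orderOf_eq_one x
    | one => simp
    | mul x y hx hy ihx ihy =>
      rw [(hcomm x hx y hy).mul_pow, ihx, ihy, one_mul]
    | inv x hx ihx => rw [inv_pow, ihx, inv_one]
  -- N is a p₁-group
  have hpgroup : IsPGroup p₁ N := by
    intro n
    refine ⟨1, ?_⟩
    ext
    simpa [pow_one] using hpow (n : G) n.2
  -- card N = p₁
  obtain ⟨x, hx⟩ := exists_prime_orderOf_dvd_card' (G := G) p₁ hdvd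
  have hxN : x ∈ N := Subgroup.subset_closure hx
  have hdvd₁ : p₁ ∣ Nat.card N := by
    have : orderOf (⟨x, hxN⟩ : N) = p₁ := by
      rw [← hx]
      exact (orderOf_injective N.subtype Subtype.coe_injective ⟨x, hxN⟩).symm
    rw [← this]
    exact orderOf_dvd_natCard _
  obtain ⟨m, hm⟩ := hpgroup.exists_card_eq
  have hcard : Nat.card N = p₁ := by
    have hdvdG : Nat.card N ∣ Nat.card G := Subgroup.card_subgroup_dvd_card N
    have h2le := hp₁.two_le
    rcases m with _ | _ | m
    · rw [pow_zero] at hm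
      rw [hm] at hdvd₁
      have := Nat.le_of_dvd one_pos hdvd₁
      omega
    · simpa using hm
    · exfalso
      apply hsq
      calc p₁ ^ 2 ∣ p₁ ^ (m + 2) := pow_dvd_pow p₁ (by omega)
        _ = Nat.card N := hm.symm
        _ ∣ Nat.card G := hdvdG
  haveI : IsCyclic N := isCyclic_of_prime_card hcard
  -- the conjugation homomorphism
  set φ : G →* MulAut N := MulAut.conjNormal with hφ
  have hrange_dvd_G : Nat.card φ.range ∣ Nat.card G := by
    have := Nat.card_congr (QuotientGroup.quotientKerEquivRange φ).toEquiv
    rw [← this]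
    exact Subgroup.card_quotient_dvd_card _
  have hcardAut : Nat.card (MulAut N) = p₁ - 1 := by
    rw [IsCyclic.card_mulAut, hcard, Nat.totient_prime hp₁]
  have hrange_dvd_aut : Nat.card φ.range ∣ p₁ - 1 := by
    rw [← hcardAut]
    exact Subgroup.card_subgroup_dvd_card φ.range
  -- coprimality
  have hcop : Nat.Coprime (Nat.card G) (p₁ - 1) := by
    rw [Nat.coprime_iff_gcd_eq_one]
    by_contra hne
    set d := Nat.gcd (Nat.card G) (p₁ - 1) with hd
    have hq : d.minFac.Prime := Nat.minFac_prime hne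
    have h1 : d.minFac ∣ Nat.card G := (Nat.minFac_dvd d).trans (Nat.gcd_dvd_left _ _)
    have h2 : d.minFac ∣ p₁ - 1 := (Nat.minFac_dvd d).trans (Nat.gcd_dvd_right _ _)
    have h2le := hp₁.two_le
    have hle : p₁ ≤ d.minFac := hsmall d.minFac hq h1
    have := Nat.le_of_dvd (by omega : 0 < p₁ - 1) h2
    omega
  have hrange1 : Nat.card φ.range = 1 :=
    Nat.eq_one_of_dvd_coprimes hcop hrange_dvd_G hrange_dvd_aut
  have hbot : φ.range = ⊥ := Subgroup.eq_bot_of_card_eq _ (by simpa using hrange1)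
  have htriv : ∀ g : G, φ g = 1 := by
    intro g
    have : φ g ∈ φ.range := ⟨g, rfl⟩
    rw [hbot, Subgroup.mem_bot] at this
    exact this
  -- conclude
  intro n hn
  rw [Subgroup.mem_center_iff]
  intro g
  have key : g * n * g⁻¹ = n := by
    have h0 : (MulAut.conjNormal g : MulAut N) = 1 := htriv g
    have h1 := MulAut.conjNormal_apply (H := N) g ⟨n, hn⟩
    rw [h0] at h1
    simpa using h1.symm
  calc g * n = (g * n * g⁻¹) * g := by group
    _ = n * g := by rw [key]
end

section
/- A smallest-order non-solvable finite POEC group must be perfect. -/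
theorem POEC.of_injective {G H : Type*} [Group G] [Group H] {f : H →* G}
    (hf : Function.Injective f) (h : POEC G) : POEC H := fun x y hx hy =>
  hf <| by
    rw [map_mul, map_mul]
    exact h (f x) (f y) (by rwa [orderOf_injective f hf]) (by rwa [orderOf_injective f hf])

/-- The minimality hypothesis only quantifies over groups in `Type`; finite groups in any
universe are reached through `Shrink`. -/
theorem isSolvable_of_poec_of_card_lt {G : Type*} [Group G]
    (hmin : ∀ (H : Type) [Group H] [Finite H],
      POEC H → Nat.card H < Nat.card G → Group.IsSolvable H)
    {H : Type*} [Group H] [Finite H] (hH : POEC H) (hcard : Nat.card H < Nat.card G) :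
    Group.IsSolvable H := by
  let e : Shrink.{0} H ≃* H := Shrink.mulEquiv
  have : Finite (Shrink.{0} H) := Finite.of_equiv _ e.toEquiv.symm
  have := hmin _ (hH.of_injective (f := e.toMonoidHom) e.injective)
    (by rwa [Nat.card_congr e.toEquiv])
  exact Group.isSolvable_of_surjective (f := e.toMonoidHom) e.surjective

theorem Group.isSolvable_of_isSolvable_commutator (G : Type*) [Group G]
    [Group.IsSolvable (commutator G)] : Group.IsSolvable G :=
  (isSolvable_iff_subgroup_quotient (commutator G)).2
    ⟨‹_›, inferInstanceAs (Group.IsSolvable (Abelianization G))⟩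

theorem stmt_14 {G : Type*} [Group G] [Finite G] (h : POEC G)
    (hns : ¬ IsSolvable G)
    (hmin : ∀ (H : Type) [Group H] [Finite H],
      POEC H → Nat.card H < Nat.card G → IsSolvable H) :
    commutator G = ⊤ := by
  by_contra hne
  have hcard : Nat.card (commutator G) < Nat.card G :=
    (Subgroup.card_le_card_group _).lt_of_ne (mt (Subgroup.eq_top_of_card_eq _) hne)
  have := isSolvable_of_poec_of_card_lt hmin (h.of_injective (commutator G).subtype_injective) hcard
  exact hns (Group.isSolvable_of_isSolvable_commutator G)
end

section
/- If G is a finite perfect POEC group with a cyclic Sylow p-subgroup for some prime p dividing |G|, then we obtain a contradiction; i.e., a finite POEC group with a cyclic Sylow p-subgroup is not perfect. -/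
theorem Subgroup.commutator_le_centralizer_of_isCyclic {G : Type*} [Group G] (N : Subgroup G)
    [N.Normal] [IsCyclic N] : _root_.commutator G ≤ centralizer (N : Set G) := by
  let _ : CommGroup (MulAut N) := (IsCyclic.mulAutMulEquiv N).toMonoidHom.commGroupOfInjective
    (IsCyclic.mulAutMulEquiv N).injective
  intro g hg n hn
  have hconj : MulAut.conjNormal g = 1 :=
    Abelianization.commutator_subset_ker (MulAut.conjNormal (H := N)) hg
  have hgn := congrArg (fun f : MulAut N => ((f ⟨n, hn⟩ : N) : G)) hconj
  simp only [MulAut.conjNormal_apply, MulAut.one_apply] at hgn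
  exact (mul_inv_eq_iff_eq_mul.mp hgn).symm

theorem Subgroup.le_center_of_isCyclic_of_commutator_eq_top {G : Type*} [Group G]
    (hG : _root_.commutator G = ⊤) (N : Subgroup G) [N.Normal] [IsCyclic N] : N ≤ center G := by
  rw [← centralizer_univ, ← coe_top, le_centralizer_iff, ← hG]
  exact N.commutator_le_centralizer_of_isCyclic

open scoped IsMulCommutative in
theorem pow_index_center_eq_one_of_commutator_eq_top {G : Type*} [Group G]
    [(Subgroup.center G).FiniteIndex] (hG : commutator G = ⊤) (g : G) :
    g ^ (Subgroup.center G).index = 1 := by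
  have hker := Abelianization.commutator_subset_ker (MonoidHom.transferCenterPow G)
    (hG ▸ Subgroup.mem_top g)
  exact congrArg Subtype.val (MonoidHom.mem_ker.mp hker)

theorem Sylow.not_dvd_card_center_of_isCyclic_of_commutator_eq_top {G : Type*} [Group G]
    [Finite G] {p : ℕ} [Fact p.Prime] (hG : commutator G = ⊤) (P : Sylow p G) [IsCyclic P] :
    ¬ p ∣ Nat.card (Subgroup.center G) := by
  have hPZ : Nat.card P ∣ (Subgroup.center G).index := by
    rw [← IsCyclic.exponent_eq_card]
    exact Monoid.exponent_dvd_of_forall_pow_eq_one fun g =>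
      Subtype.ext (pow_index_center_eq_one_of_commutator_eq_top hG g)
  obtain ⟨k, hk⟩ := hPZ
  have hPindex : P.index = Nat.card (Subgroup.center G) * k := by
    apply Nat.eq_of_mul_eq_mul_left (Nat.card_pos (α := P))
    rw [(P : Subgroup G).card_mul_index, ← (Subgroup.center G).card_mul_index, hk]
    ring
  intro hpZ
  exact P.not_dvd_index (hPindex ▸ dvd_mul_of_dvd_left hpZ k)

namespace POEC

variable {G : Type*} [Group G] (p : ℕ) [Fact p.Prime]

theorem commute_of_pow_eq_one (h : POEC G) {a b : G} (ha : a ^ p = 1) (hb : b ^ p = 1) :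
    Commute a b := by
  rcases eq_or_ne a 1 with rfl | ha1
  · exact Commute.one_left b
  rcases eq_or_ne b 1 with rfl | hb1
  · exact Commute.one_right a
  exact h a b (orderOf_eq_prime ha ha1 ▸ Fact.out) (orderOf_eq_prime hb hb1 ▸ Fact.out)

variable (h : POEC G)

/-- `Ω₁`: the elements of exponent dividing `p`, a subgroup because elements of order `p`
commute. -/
def omegaOne : Subgroup G where
  carrier := {g | g ^ p = 1}
  one_mem' := one_pow p
  mul_mem' {a b} ha hb := show (a * b) ^ p = 1 by
    rw [(h.commute_of_pow_eq_one p ha hb).mul_pow, ha, hb, one_mul]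
  inv_mem' {a} ha := show a⁻¹ ^ p = 1 by rw [inv_pow, ha, inv_one]

theorem mem_omegaOne {g : G} : g ∈ h.omegaOne p ↔ g ^ p = 1 := Iff.rfl

theorem normal_omegaOne : (h.omegaOne p).Normal :=
  ⟨fun n hn g => by
    rw [mem_omegaOne, conj_pow, (h.mem_omegaOne p).mp hn, mul_one, mul_inv_cancel]⟩

theorem isPGroup_omegaOne : IsPGroup p (h.omegaOne p) :=
  fun g => ⟨1, Subtype.ext <| by rw [pow_one]; exact g.2⟩

theorem isCyclic_omegaOne [Finite G] (P : Sylow p G) [IsCyclic P] : IsCyclic (h.omegaOne p) := by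
  obtain ⟨Q, hQ⟩ := (h.isPGroup_omegaOne p).exists_le_sylow
  have : IsCyclic Q := isCyclic_of_surjective (P.equiv Q).toMonoidHom (P.equiv Q).surjective
  exact Subgroup.isCyclic_of_le hQ

end POEC

theorem stmt_15 {G : Type*} [Group G] [Finite G] (h : POEC G) (p : ℕ)
    [Fact p.Prime] (hdvd : p ∣ Nat.card G) (P : Sylow p G) (hcyc : IsCyclic P) :
    commutator G ≠ ⊤ := by
  intro hG
  have := h.normal_omegaOne p
  have := h.isCyclic_omegaOne p P
  obtain ⟨x, hx⟩ := exists_prime_orderOf_dvd_card' p hdvd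
  have hxZ : x ∈ Subgroup.center G :=
    Subgroup.le_center_of_isCyclic_of_commutator_eq_top hG (h.omegaOne p)
      ((h.mem_omegaOne p).mpr (hx ▸ pow_orderOf_eq_one x))
  exact P.not_dvd_card_center_of_isCyclic_of_commutator_eq_top hG
    (hx ▸ (Subgroup.center G).orderOf_dvd_natCard hxZ)
end

section
/- A finite group G is an SSIP group if and only if the index [G : P[G]] is a prime. -/
/-- A group is SSIP if there is a unique proper subgroup intersecting every
non-trivial subgroup non-trivially. -/
def SSIP (G : Type*) [Group G] : Prop :=
  ∃! H : Subgroup G, H ≠ ⊤ ∧ ∀ X : Subgroup G, X ≠ ⊥ → H ⊓ X ≠ ⊥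

section aux
variable {G : Type*} [Group G] [Finite G]

/-- Every nontrivial subgroup of a finite group contains an element of prime order. -/
lemma exists_prime_order_mem {X : Subgroup G} (hX : X ≠ ⊥) :
    ∃ x : G, x ∈ X ∧ (orderOf x).Prime := by
  obtain ⟨g, hg⟩ := Subgroup.ne_bot_iff_exists_ne_one.mp hX
  have hg1 : orderOf g ≠ 1 := by
    simpa [orderOf_eq_one_iff] using hg
  have hp : (orderOf g).minFac.Prime := Nat.minFac_prime hg1
  have hdvd : (orderOf g).minFac ∣ Nat.card X :=
    (Nat.minFac_dvd _).trans (orderOf_dvd_natCard g)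
  haveI : Fact (orderOf g).minFac.Prime := ⟨hp⟩
  obtain ⟨x, hx⟩ := exists_prime_orderOf_dvd_card' (G := X) _ hdvd
  refine ⟨(x : G), x.2, ?_⟩
  have hoc : orderOf (x : G) = orderOf x := orderOf_injective X.subtype Subtype.coe_injective x
  rw [hoc, hx]
  exact hp

/-- P[G] intersects every nontrivial subgroup nontrivially. -/
lemma pg_inf_ne_bot {X : Subgroup G} (hX : X ≠ ⊥) :
    Subgroup.closure {x : G | (orderOf x).Prime} ⊓ X ≠ ⊥ := by
  obtain ⟨x, hxX, hxp⟩ := exists_prime_order_mem hX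
  have hx1 : x ≠ 1 := by
    intro h; rw [h, orderOf_one] at hxp; exact hxp.one_lt.ne' rfl
  intro hbot
  have : x ∈ Subgroup.closure {x : G | (orderOf x).Prime} ⊓ X :=
    ⟨Subgroup.subset_closure hxp, hxX⟩
  rw [hbot, Subgroup.mem_bot] at this
  exact hx1 this

/-- Any subgroup with the SIP property contains P[G]. -/
lemma pg_le_of_sip {H : Subgroup G} (hH : ∀ X : Subgroup G, X ≠ ⊥ → H ⊓ X ≠ ⊥) :
    Subgroup.closure {x : G | (orderOf x).Prime} ≤ H := by
  rw [Subgroup.closure_le]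
  intro x hx
  have hxp : (orderOf x).Prime := hx
  have hx1 : x ≠ 1 := by
    intro h; rw [h, orderOf_one] at hxp; exact hxp.one_lt.ne' rfl
  have hXbot : Subgroup.zpowers x ≠ ⊥ := by
    rw [Ne, Subgroup.zpowers_eq_bot]; exact hx1
  obtain ⟨y, hy1⟩ := Subgroup.ne_bot_iff_exists_ne_one.mp (hH _ hXbot)
  have hyH : (y : G) ∈ H := y.2.1
  have hyX : (y : G) ∈ Subgroup.zpowers x := y.2.2
  have hy1' : (y : G) ≠ 1 := by
    intro h
    exact hy1 (Subtype.ext h)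
  have hdvd : orderOf (y : G) ∣ orderOf x := orderOf_dvd_of_mem_zpowers hyX
  have hoy : orderOf (y : G) = orderOf x := by
    rcases (Nat.Prime.eq_one_or_self_of_dvd hxp _ hdvd) with h | h
    · exact absurd (orderOf_eq_one_iff.mp h) hy1'
    · exact h
  have hle : Subgroup.zpowers (y : G) ≤ Subgroup.zpowers x :=
    Subgroup.zpowers_le.mpr hyX
  have heq : Subgroup.zpowers (y : G) = Subgroup.zpowers x := by
    apply Subgroup.eq_of_le_of_card_ge hle
    rw [Nat.card_zpowers, Nat.card_zpowers, hoy]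
  have : x ∈ Subgroup.zpowers (y : G) := by
    rw [heq]; exact Subgroup.mem_zpowers x
  exact Subgroup.zpowers_le.mpr hyH this

omit [Finite G] in
/-- P[G] is normal. -/
lemma pg_normal : (Subgroup.closure {x : G | (orderOf x).Prime}).Normal := by
  constructor
  intro n hn g
  have h1 : g * n * g⁻¹ ∈
      Subgroup.map (MulAut.conj g).toMonoidHom
        (Subgroup.closure {x : G | (orderOf x).Prime}) := ⟨n, hn, by simp⟩
  rw [MonoidHom.map_closure] at h1
  refine Subgroup.closure_mono ?_ h1
  rintro _ ⟨x, hx, rfl⟩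
  have hord : orderOf ((MulAut.conj g).toMonoidHom x) = orderOf x :=
    orderOf_injective (MulAut.conj g).toMonoidHom (MulAut.conj g).injective x
  show (orderOf ((MulAut.conj g).toMonoidHom x)).Prime
  rw [hord]; exact hx

end aux

theorem stmt_18 {G : Type*} [Group G] [Finite G] :
    SSIP G ↔ (Subgroup.closure {x : G | (orderOf x).Prime}).index.Prime := by
  set P := Subgroup.closure {x : G | (orderOf x).Prime} with hP
  haveI hnorm : P.Normal := pg_normal
  constructor
  · rintro ⟨H, ⟨hHtop, hHsip⟩, huniq⟩
    have hPle : P ≤ H := pg_le_of_sip hHsip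
    have hPtop : P ≠ ⊤ := fun h => hHtop (top_le_iff.mp (h ▸ hPle))
    have hHP : H = P := (huniq P ⟨hPtop, fun X hX => pg_inf_ne_bot hX⟩).symm
    -- every subgroup of G ⧸ P is ⊥ or ⊤
    have hsub : ∀ K : Subgroup (G ⧸ P), K = ⊥ ∨ K = ⊤ := by
      intro K
      have hPL : P ≤ K.comap (QuotientGroup.mk' P) := by
        intro p hp
        have h1 : (QuotientGroup.mk' P) p = 1 := by
          simpa [QuotientGroup.eq_one_iff] using hp
        rw [Subgroup.mem_comap]
        show (QuotientGroup.mk' P) p ∈ K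
        rw [h1]
        exact K.one_mem
      have hmc : Subgroup.map (QuotientGroup.mk' P) (K.comap (QuotientGroup.mk' P)) = K :=
        Subgroup.map_comap_eq_self_of_surjective (QuotientGroup.mk'_surjective P) K
      by_cases hLtop : K.comap (QuotientGroup.mk' P) = ⊤
      · right
        rw [← hmc, hLtop]
        exact Subgroup.map_top_of_surjective _ (QuotientGroup.mk'_surjective P)
      · left
        have hLsip : ∀ X : Subgroup G, X ≠ ⊥ → K.comap (QuotientGroup.mk' P) ⊓ X ≠ ⊥ := by
          intro X hX hbot
          exact pg_inf_ne_bot hX (le_bot_iff.mp (hbot ▸ inf_le_inf_right X hPL))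
        have hLP : K.comap (QuotientGroup.mk' P) = P :=
          (huniq _ ⟨hLtop, hLsip⟩).trans hHP
        rw [← hmc, hLP, eq_bot_iff]
        rintro _ ⟨p, hp, rfl⟩
        simpa [QuotientGroup.eq_one_iff] using hp
    -- the quotient is nontrivial
    have hidx0 : P.index ≠ 0 := Subgroup.index_ne_zero_of_finite
    have hidx1 : P.index ≠ 1 := fun h => hPtop (Subgroup.index_eq_one.mp h)
    have hcard : Nat.card (G ⧸ P) = P.index := rfl
    -- take an element of prime order in the quotient, its zpowers is ⊤
    have hp : (Nat.card (G ⧸ P)).minFac.Prime := by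
      apply Nat.minFac_prime
      rw [hcard]; exact hidx1
    haveI : Fact (Nat.card (G ⧸ P)).minFac.Prime := ⟨hp⟩
    obtain ⟨x, hx⟩ := exists_prime_orderOf_dvd_card' (G := G ⧸ P) _ (Nat.minFac_dvd _)
    have hx1 : x ≠ 1 := by
      intro h; rw [h, orderOf_one] at hx; exact hp.one_lt.ne' hx.symm
    have hz : Subgroup.zpowers x = ⊤ := by
      rcases hsub (Subgroup.zpowers x) with h | h
      · exact absurd (Subgroup.zpowers_eq_bot.mp h) hx1
      · exact h
    have hcp : Nat.card (G ⧸ P) = (Nat.card (G ⧸ P)).minFac := by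
      rw [← hx, ← Nat.card_zpowers, hz, Subgroup.card_top]
    rw [← hcard, hcp]
    exact hp
  · intro hprime
    refine ⟨P, ⟨?_, fun X hX => pg_inf_ne_bot hX⟩, ?_⟩
    · intro h
      rw [h, Subgroup.index_top] at hprime
      exact hprime.one_lt.ne' rfl
    · rintro K ⟨hKtop, hKsip⟩
      have hPK : P ≤ K := pg_le_of_sip hKsip
      have hmul : P.relIndex K * K.index = P.index := Subgroup.relIndex_mul_index hPK
      have hKidx1 : K.index ≠ 1 := fun h => hKtop (Subgroup.index_eq_one.mp h)
      have hKdvd : K.index ∣ P.index := ⟨P.relIndex K, by rw [← hmul, mul_comm]⟩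
      have hKidx : K.index = P.index := ((Nat.dvd_prime hprime).mp hKdvd).resolve_left hKidx1
      have hrel : P.relIndex K = 1 := by
        apply Nat.eq_of_mul_eq_mul_right hprime.pos
        rw [one_mul, ← hKidx, hmul, hKidx]
      exact le_antisymm (Subgroup.relIndex_eq_one.mp hrel) hPK
end

section
/- A finite cyclic group G is an SSIP group if and only if |G| = p1^2 · p2 · ... · pk for distinct primes p1, ..., pk. -/
namespace SSIPaux

variable {G : Type*} [Group G] [Finite G] [IsCyclic G]

lemma mem_iff_pow (H : Subgroup G) (x : G) : x ∈ H ↔ x ^ Nat.card H = 1 := by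
  classical
  cases nonempty_fintype G
  constructor
  · intro hx
    have h : orderOf (⟨x, hx⟩ : H) ∣ Nat.card H := orderOf_dvd_natCard _
    rw [← Subgroup.orderOf_coe] at h
    exact orderOf_dvd_iff_pow_eq_one.mp h
  · intro hx
    have hpos : 0 < Nat.card H := Nat.card_pos
    have hsub : (H : Set G).toFinset ⊆
        Finset.univ.filter (fun a => a ^ Nat.card H = 1) := by
      intro a ha
      simp only [Set.mem_toFinset, SetLike.mem_coe] at ha
      simp only [Finset.mem_filter, Finset.mem_univ, true_and]
      have h : orderOf (⟨a, ha⟩ : H) ∣ Nat.card H := orderOf_dvd_natCard _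
      rw [← Subgroup.orderOf_coe] at h
      exact orderOf_dvd_iff_pow_eq_one.mp h
    have hcard : (H : Set G).toFinset.card = Nat.card H := by
      rw [Set.toFinset_card, Nat.card_eq_fintype_card]
      exact Fintype.card_congr (Equiv.refl _)
    have heq := Finset.eq_of_subset_of_card_le hsub
      (by rw [hcard]; exact IsCyclic.card_pow_eq_one_le hpos)
    have hxmem : x ∈ Finset.univ.filter (fun a => a ^ Nat.card H = 1) :=
      Finset.mem_filter.mpr ⟨Finset.mem_univ x, hx⟩
    rw [← heq] at hxmem
    exact Set.mem_toFinset.mp hxmem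

lemma eq_of_card_eq {H K : Subgroup G} (h : Nat.card H = Nat.card K) : H = K := by
  ext x; rw [mem_iff_pow, mem_iff_pow, h]

lemma le_of_card_dvd {H K : Subgroup G} (h : Nat.card H ∣ Nat.card K) : H ≤ K := by
  intro x hx
  rw [mem_iff_pow] at hx ⊢
  obtain ⟨c, hc⟩ := h
  rw [hc, pow_mul, hx, one_pow]

lemma exists_card_eq {d : ℕ} (hd : d ∣ Nat.card G) : ∃ H : Subgroup G, Nat.card H = d := by
  obtain ⟨g, hg⟩ := IsCyclic.exists_ofOrder_eq_natCard (α := G)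
  have hn : Nat.card G ≠ 0 := Nat.card_pos.ne'
  refine ⟨Subgroup.zpowers (g ^ (Nat.card G / d)), ?_⟩
  rw [Nat.card_zpowers, orderOf_pow, hg,
    Nat.gcd_eq_right (Nat.div_dvd_of_dvd hd), Nat.div_div_self hd hn]

lemma ne_top_iff (H : Subgroup G) : H ≠ ⊤ ↔ Nat.card H ≠ Nat.card G := by
  constructor
  · intro h hc
    exact h (eq_of_card_eq (by rw [hc, Subgroup.card_top]))
  · intro h hc
    exact h (by rw [hc, Subgroup.card_top])

lemma inter_char (H : Subgroup G) :
    (∀ X : Subgroup G, X ≠ ⊥ → H ⊓ X ≠ ⊥) ↔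
      ∀ q : ℕ, q.Prime → q ∣ Nat.card G → q ∣ Nat.card H := by
  constructor
  · intro h q hq hqn
    by_contra hqd
    obtain ⟨X, hX⟩ := exists_card_eq hqn
    have hXbot : X ≠ ⊥ := by
      intro hb
      rw [hb, Subgroup.card_bot] at hX
      exact hq.one_lt.ne hX
    refine h X hXbot ?_
    have h1 : Nat.card (H ⊓ X : Subgroup G) ∣ q :=
      hX ▸ Subgroup.card_dvd_of_le inf_le_right
    have h2 : Nat.card (H ⊓ X : Subgroup G) ∣ Nat.card H :=
      Subgroup.card_dvd_of_le inf_le_left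
    rcases hq.eq_one_or_self_of_dvd _ h1 with h' | h'
    · exact Subgroup.card_eq_one.mp h'
    · exact absurd (h' ▸ h2) hqd
  · intro h X hX
    classical
    cases nonempty_fintype X
    have hX1 : Nat.card X ≠ 1 := fun h1 => hX (Subgroup.card_eq_one.mp h1)
    have hq : (Nat.card X).minFac.Prime := Nat.minFac_prime hX1
    have hqn : (Nat.card X).minFac ∣ Nat.card G :=
      (Nat.minFac_dvd _).trans (Subgroup.card_subgroup_dvd_card X)
    obtain ⟨x, hx⟩ := @exists_prime_orderOf_dvd_card X _ _ _ ⟨hq⟩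
      (by rw [← Nat.card_eq_fintype_card]; exact Nat.minFac_dvd _)
    have hxG : orderOf (x : G) = (Nat.card X).minFac := by
      rw [Subgroup.orderOf_coe, hx]
    have hle : Subgroup.zpowers (x : G) ≤ H :=
      le_of_card_dvd (by rw [Nat.card_zpowers, hxG]; exact h _ hq hqn)
    have hleX : Subgroup.zpowers (x : G) ≤ X := by
      rw [Subgroup.zpowers_le]; exact x.2
    intro hbot
    have hzb : Subgroup.zpowers (x : G) = ⊥ := le_bot_iff.mp (hbot ▸ le_inf hle hleX)
    have hone : Nat.card (Subgroup.zpowers (x : G)) = 1 := by rw [hzb, Subgroup.card_bot]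
    rw [Nat.card_zpowers, hxG] at hone
    exact hq.one_lt.ne' hone

lemma ssip_iff_unique_div :
    SSIP G ↔ ∃! d : ℕ, d ∣ Nat.card G ∧ d ≠ Nat.card G ∧
      ∀ q : ℕ, q.Prime → q ∣ Nat.card G → q ∣ d := by
  constructor
  · rintro ⟨H, ⟨hHtop, hHint⟩, huniq⟩
    refine ⟨Nat.card H, ⟨Subgroup.card_subgroup_dvd_card H,
      (ne_top_iff H).mp hHtop, (inter_char H).mp hHint⟩, ?_⟩
    rintro d ⟨hdn, hdne, hdp⟩
    obtain ⟨K, hK⟩ := exists_card_eq hdn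
    have hKH : K = H := huniq K ⟨(ne_top_iff K).mpr (hK ▸ hdne),
      (inter_char K).mpr (fun q hq hqn => hK ▸ hdp q hq hqn)⟩
    rw [← hK, hKH]
  · rintro ⟨d, ⟨hdn, hdne, hdp⟩, huniq⟩
    obtain ⟨H, hH⟩ := exists_card_eq hdn
    refine ⟨H, ⟨(ne_top_iff H).mpr (hH ▸ hdne),
      (inter_char H).mpr (fun q hq hqn => hH ▸ hdp q hq hqn)⟩, ?_⟩
    rintro K ⟨hKtop, hKint⟩
    have hKd : Nat.card K = d := huniq (Nat.card K) ⟨Subgroup.card_subgroup_dvd_card K,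
      (ne_top_iff K).mp hKtop, (inter_char K).mp hKint⟩
    exact eq_of_card_eq (by rw [hKd, hH])

lemma radical_dvd_iff {n d : ℕ} (hn : n ≠ 0) :
    (∀ q : ℕ, q.Prime → q ∣ n → q ∣ d) ↔ (∏ q ∈ n.primeFactors, q) ∣ d := by
  constructor
  · intro h
    exact Finset.prod_primes_dvd d
      (fun q hq => (Nat.prime_of_mem_primeFactors hq).prime)
      (fun q hq => h q (Nat.prime_of_mem_primeFactors hq) (Nat.dvd_of_mem_primeFactors hq))
  · intro h q hq hqn
    exact (Finset.dvd_prod_of_mem _ (Nat.mem_primeFactors.mpr ⟨hq, hqn, hn⟩)).trans h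

lemma nt (n : ℕ) (hn : n ≠ 0) :
    (∃! d : ℕ, d ∣ n ∧ d ≠ n ∧ (∏ q ∈ n.primeFactors, q) ∣ d) ↔
      ∃ (p : ℕ) (ps : Finset ℕ), p.Prime ∧ (∀ q ∈ ps, Nat.Prime q) ∧
        p ∉ ps ∧ n = p ^ 2 * ps.prod id := by
  classical
  set r := ∏ q ∈ n.primeFactors, q with hr
  have hrdvd : r ∣ n := Nat.prod_primeFactors_dvd n
  have hr0 : r ≠ 0 := fun h => hn (Nat.eq_zero_of_zero_dvd (h ▸ hrdvd))
  have hrpos : 0 < r := Nat.pos_of_ne_zero hr0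
  obtain ⟨k, hnrk⟩ := hrdvd
  have key : (∃! d : ℕ, d ∣ n ∧ d ≠ n ∧ r ∣ d) ↔ k.Prime := by
    constructor
    · rintro ⟨d₀, ⟨hd₀n, hd₀ne, hrd₀⟩, huniq⟩
      have hk1 : k ≠ 1 := by
        intro h1
        rw [h1, mul_one] at hnrk
        exact hd₀ne (Nat.dvd_antisymm hd₀n (hnrk ▸ hrd₀))
      by_contra hknp
      have hp : k.minFac.Prime := Nat.minFac_prime hk1
      obtain ⟨m, hm⟩ := Nat.minFac_dvd k
      have hpne : k.minFac ≠ k := fun h => hknp (h ▸ hp)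
      have hrne : r ≠ n := by
        intro h
        apply hk1
        have h2 : r * k = r * 1 := by rw [mul_one, ← hnrk, h]
        exact Nat.eq_of_mul_eq_mul_left hrpos h2
      have h1 : r = d₀ := huniq r ⟨⟨k, hnrk⟩, hrne, dvd_refl r⟩
      have h2 : r * k.minFac = d₀ := by
        refine huniq _ ⟨⟨m, by rw [hnrk, mul_assoc, ← hm]⟩, ?_, dvd_mul_right _ _⟩
        intro h
        apply hpne
        have h3 : r * k.minFac = r * k := by rw [h, hnrk]
        exact Nat.eq_of_mul_eq_mul_left hrpos h3
      have h4 : r * 1 = r * k.minFac := by rw [mul_one]; exact h1.trans h2.symm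
      exact hp.one_lt.ne' (Nat.eq_of_mul_eq_mul_left hrpos h4.symm)
    · intro hkp
      refine ⟨r, ⟨⟨k, hnrk⟩, ?_, dvd_refl r⟩, ?_⟩
      · intro h
        have h2 : r * k = r * 1 := by rw [mul_one, ← hnrk, h]
        exact hkp.one_lt.ne' (Nat.eq_of_mul_eq_mul_left hrpos h2)
      · rintro d ⟨hdn, hdne, hrd⟩
        obtain ⟨e, hde⟩ := hrd
        obtain ⟨c, hc⟩ := hdn
        have hrk : r * k = r * (e * c) := by
          rw [← hnrk, hc, hde, mul_assoc]
        have hek : e ∣ k := ⟨c, Nat.eq_of_mul_eq_mul_left hrpos hrk⟩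
        rcases hkp.eq_one_or_self_of_dvd e hek with h1 | h1
        · rw [hde, h1, mul_one]
        · exact absurd (by rw [hde, h1, ← hnrk]) hdne
  rw [key]
  constructor
  · intro hkp
    have hkn : k ∣ n := ⟨r, by rw [hnrk, mul_comm]⟩
    have hkpf : k ∈ n.primeFactors := Nat.mem_primeFactors.mpr ⟨hkp, hkn, hn⟩
    refine ⟨k, n.primeFactors.erase k, hkp,
      fun q hq => Nat.prime_of_mem_primeFactors (Finset.mem_of_mem_erase hq),
      Finset.notMem_erase _ _, ?_⟩
    have h2 : k * (n.primeFactors.erase k).prod id = r :=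
      Finset.mul_prod_erase _ id hkpf
    calc n = r * k := hnrk
      _ = (k * (n.primeFactors.erase k).prod id) * k := by rw [h2]
      _ = k ^ 2 * (n.primeFactors.erase k).prod id := by ring
  · rintro ⟨p, ps, hp, hps, hpn, hnpp⟩
    have hp2 : (p ^ 2 : ℕ) ≠ 0 := pow_ne_zero 2 hp.pos.ne'
    have hP0 : ps.prod id ≠ 0 :=
      Finset.prod_ne_zero_iff.mpr (fun q hq => (hps q hq).pos.ne')
    have hprodpf : (ps.prod id).primeFactors = ps := Nat.primeFactors_prod hps
    have hpfn : n.primeFactors = insert p ps := by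
      rw [hnpp, Nat.primeFactors_mul hp2 hP0, Nat.primeFactors_pow _ (by norm_num),
        hp.primeFactors, hprodpf]
      exact (Finset.insert_eq p ps).symm
    have hrval : r = p * ps.prod id := by
      rw [hr, hpfn]
      exact Finset.prod_insert hpn
    have h2 : r * k = r * p := by
      rw [← hnrk, hnpp, hrval]; ring
    have hk : k = p := Nat.eq_of_mul_eq_mul_left hrpos h2
    rw [hk]; exact hp

end SSIPaux

theorem stmt_19 {G : Type*} [Group G] [Finite G] [IsCyclic G] :
    SSIP G ↔ ∃ (p : ℕ) (ps : Finset ℕ), p.Prime ∧ (∀ q ∈ ps, Nat.Prime q) ∧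
      p ∉ ps ∧ Nat.card G = p ^ 2 * ps.prod id := by
  have hn : Nat.card G ≠ 0 := Nat.card_pos.ne'
  rw [SSIPaux.ssip_iff_unique_div,
    existsUnique_congr (fun d => by
      rw [and_congr_right_iff]
      intro _
      rw [and_congr_right_iff]
      intro _
      exact SSIPaux.radical_dvd_iff hn)]
  exact SSIPaux.nt (Nat.card G) hn
end
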